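/- Let A be a compact metric space. For each n, let X_1^n, ..., X_n^n be pairwise independent A-valued random variables with laws μ_i^n, S_n = (1/n)∑_i δ_{X_i^n} the empirical measure, and s_n = (1/n)∑_i μ_i^n. Then β(S_n, s_n) → 0 in probability as n → ∞, where β is the dual bounded-Lipschitz metric on 𝒫(A). -/

import Mathlib

open MeasureTheory ProbabilityTheory Filter Topology BoundedContinuousFunction
open scoped NNReal

/-!
For a fixed test function `g` the deviation `∫ g d(S_n - s_n)` is the average of `n` pairwise
independent centred variables bounded by `‖g‖`, so Chebyshev's inequality bounds the probability
that it exceeds `t` by `‖g‖² / (n t²)`. The deviation is `2`-Lipschitz in `g` for the sup norm, and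
by Arzelà–Ascoli the bounded-Lipschitz unit ball is totally bounded in `A →ᵇ ℝ`; a union bound over
a finite `ε/4`-net of it gives `P(β(S_n, s_n) > ε) ≤ K / n`.
-/

theorem totallyBounded_setOf_norm_le_lipschitzWith {A E : Type*} [PseudoMetricSpace A]
    [CompactSpace A] [NormedAddCommGroup E] [ProperSpace E] (M : ℝ) (L : ℝ≥0) :
    TotallyBounded {f : A →ᵇ E | ‖f‖ ≤ M ∧ LipschitzWith L f} := by
  refine (arzela_ascoli (Metric.closedBall 0 M) (isCompact_closedBall 0 M) _ ?_ ?_).totallyBounded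
    |>.subset subset_closure
  · rintro f x ⟨hf, -⟩
    exact mem_closedBall_zero_iff.2 ((f.norm_coe_le_norm x).trans hf)
  · exact (LipschitzWith.uniformEquicontinuous _ L fun f => f.2.2).equicontinuous

def blUnitBall (A : Type*) [PseudoMetricSpace A] : Set (A → ℝ) :=
  {h | ∃ (M : ℝ) (L : ℝ≥0), (∀ a, |h a| ≤ M) ∧ LipschitzWith L h ∧ M + (L : ℝ) ≤ 1}

theorem exists_bcf_eq_norm_le_one_lipschitzWith_one_of_mem_blUnitBall {A : Type*}
    [PseudoMetricSpace A] [CompactSpace A] {h : A → ℝ} (hh : h ∈ blUnitBall A) :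
    ∃ f : A →ᵇ ℝ, ⇑f = h ∧ ‖f‖ ≤ 1 ∧ LipschitzWith 1 f := by
  obtain ⟨M, L, hM, hL, hML⟩ := hh
  have hL1 : LipschitzWith 1 h := LipschitzWith.of_dist_le_mul fun x y => by
    have : (L : ℝ) ≤ 1 := by linarith [abs_nonneg (h x), hM x]
    simpa using (hL.dist_le_mul x y).trans (mul_le_mul_of_nonneg_right this dist_nonneg)
  refine ⟨mkOfCompact ⟨h, hL.continuous⟩, rfl, (norm_le zero_le_one).2 fun x => ?_, hL1⟩
  exact (hM x).trans (by linarith [L.2])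

section EmpiricalDeviation

variable {A Ω : Type*} [MeasurableSpace Ω] {P : Measure Ω} {n : ℕ}

/-- `∫ h d(S - s)` for the empirical measure `S` of `X` and its mean measure `s`. -/
noncomputable def empiricalDeviation (P : Measure Ω) (X : Fin n → Ω → A) (h : A → ℝ) (ω : Ω) :
    ℝ :=
  1 / (n : ℝ) * ∑ i : Fin n, (h (X i ω) - ∫ ω', h (X i ω') ∂P)

theorem variance_average_le [IsProbabilityMeasure P] {Y : Fin n → Ω → ℝ}
    (hY : ∀ i, MemLp (Y i) 2 P) (hindep : Pairwise fun i j => IndepFun (Y i) (Y j) P) {σ2 : ℝ}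
    (hvar : ∀ i, variance (Y i) P ≤ σ2) :
    variance (fun ω => 1 / (n : ℝ) * ∑ i, Y i ω) P ≤ σ2 / n := by
  have hsum : variance (∑ i, Y i) P = ∑ i, variance (Y i) P :=
    IndepFun.variance_sum (fun i _ => hY i) fun i _ j _ hij => hindep hij
  calc variance (fun ω => 1 / (n : ℝ) * ∑ i, Y i ω) P
      = (1 / (n : ℝ)) ^ 2 * ∑ i, variance (Y i) P := by
        rw [← hsum, ← variance_smul]
        congr 1
        ext ω
        simp [Finset.sum_apply]
    _ ≤ (1 / (n : ℝ)) ^ 2 * (n * σ2) := by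
        gcongr
        simpa using Finset.sum_le_sum fun i (_ : i ∈ Finset.univ) => hvar i
    _ = σ2 / n := by
        rcases eq_or_ne (n : ℝ) 0 with hn | hn
        · simp [hn]
        · field_simp

variable [TopologicalSpace A] [MeasurableSpace A] [OpensMeasurableSpace A] [IsProbabilityMeasure P]
  {X : Fin n → Ω → A}

theorem BoundedContinuousFunction.integrable_comp (g : A →ᵇ ℝ) {Y : Ω → A}
    (hY : AEMeasurable Y P) :
    Integrable (fun ω => g (Y ω)) P :=
  (g.integrable (P.map Y)).comp_aemeasurable hY

theorem abs_empiricalDeviation_sub_le (hX : ∀ i, AEMeasurable (X i) P) (f g : A →ᵇ ℝ) (ω : Ω) :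
    |empiricalDeviation P X f ω - empiricalDeviation P X g ω| ≤ 2 * dist f g := by
  have hterm : ∀ i, |(f (X i ω) - ∫ ω', f (X i ω') ∂P) - (g (X i ω) - ∫ ω', g (X i ω') ∂P)|
      ≤ 2 * dist f g := fun i => by
    have hint : |(∫ ω', f (X i ω') ∂P) - ∫ ω', g (X i ω') ∂P| ≤ dist f g := by
      rw [← integral_sub (f.integrable_comp (hX i)) (g.integrable_comp (hX i)),
        dist_eq_norm]
      simpa using norm_integral_le_of_norm_le_const (μ := P)
        (Eventually.of_forall fun ω' => (f - g).norm_coe_le_norm (X i ω'))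
    have hpt : |f (X i ω) - g (X i ω)| ≤ dist f g := by
      simpa [Real.dist_eq] using dist_coe_le_dist (f := f) (g := g) (X i ω)
    calc _ = |(f (X i ω) - g (X i ω)) - ((∫ ω', f (X i ω') ∂P) - ∫ ω', g (X i ω') ∂P)| := by
          ring_nf
      _ ≤ _ := (abs_sub _ _).trans (by linarith)
  calc _ = |1 / (n : ℝ) * ∑ i : Fin n, ((f (X i ω) - ∫ ω', f (X i ω') ∂P)
        - (g (X i ω) - ∫ ω', g (X i ω') ∂P))| := by
        rw [empiricalDeviation, empiricalDeviation, ← mul_sub, ← Finset.sum_sub_distrib]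
    _ ≤ 1 / (n : ℝ) * (n * (2 * dist f g)) := by
        rw [abs_mul, abs_of_nonneg (by positivity)]
        gcongr
        refine (Finset.abs_sum_le_sum_abs _ _).trans ?_
        simpa using Finset.sum_le_sum fun i (_ : i ∈ Finset.univ) => hterm i
    _ ≤ 2 * dist f g := by
        rcases eq_or_ne (n : ℝ) 0 with hn | hn
        · simp [hn, dist_nonneg]
        · rw [← mul_assoc, one_div_mul_cancel hn, one_mul]

theorem measure_le_abs_empiricalDeviation_le (hX : ∀ i, AEMeasurable (X i) P)
    (hindep : Pairwise fun i j => IndepFun (X i) (X j) P) (g : A →ᵇ ℝ) {t : ℝ} (ht : 0 < t) :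
    P {ω | t ≤ |empiricalDeviation P X g ω|} ≤ ENNReal.ofReal (‖g‖ ^ 2 / (n * t ^ 2)) := by
  set Z : Ω → ℝ := fun ω => 1 / (n : ℝ) * ∑ i, g (X i ω)
  have hdev : ∀ ω, empiricalDeviation P X g ω = Z ω - P[Z] := fun ω => by
    simp only [empiricalDeviation, Z]
    rw [integral_const_mul, integral_finsetSum _ fun i _ => g.integrable_comp (hX i),
      Finset.sum_sub_distrib, mul_sub]
  have hmem : ∀ i, MemLp (fun ω => g (X i ω)) 2 P := fun i =>
    .of_bound (g.continuous.measurable.comp_aemeasurable (hX i)).aestronglyMeasurable ‖g‖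
      (Eventually.of_forall fun ω => g.norm_coe_le_norm _)
  have hvar : ∀ i, variance (fun ω => g (X i ω)) P ≤ ‖g‖ ^ 2 := fun i => by
    have hbound : ∀ᵐ ω ∂P, g (X i ω) ∈ Set.Icc (-‖g‖) ‖g‖ := Eventually.of_forall fun ω =>
      abs_le.1 (by simpa using g.norm_coe_le_norm (X i ω))
    convert variance_le_sq_of_bounded hbound (hmem i).aemeasurable using 1
    ring
  have hvarZ : variance Z P ≤ ‖g‖ ^ 2 / n := variance_average_le hmem
    (fun i j hij => (hindep hij).comp g.continuous.measurable g.continuous.measurable) hvar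
  calc P {ω | t ≤ |empiricalDeviation P X g ω|} = P {ω | t ≤ |Z ω - P[Z]|} := by simp_rw [hdev]
    _ ≤ ENNReal.ofReal (variance Z P / t ^ 2) :=
        meas_ge_le_variance_div_sq ((memLp_finsetSum _ fun i _ => hmem i).const_mul _) ht
    _ ≤ ENNReal.ofReal (‖g‖ ^ 2 / (n * t ^ 2)) := by
        rw [← div_div]
        gcongr

end EmpiricalDeviation

theorem exists_forall_measure_blUnitBall_deviation_gt_le (A : Type*) [PseudoMetricSpace A]
    [CompactSpace A] [MeasurableSpace A] [BorelSpace A] {Ω : Type*} [MeasurableSpace Ω]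
    (P : Measure Ω) [IsProbabilityMeasure P] {ε : ℝ} (hε : 0 < ε) :
    ∃ K : ℝ, ∀ (n : ℕ) (X : Fin n → Ω → A), (∀ i, AEMeasurable (X i) P) →
      (Pairwise fun i j => IndepFun (X i) (X j) P) →
      P {ω | ∃ h ∈ blUnitBall A, ε < |empiricalDeviation P X h ω|} ≤ ENNReal.ofReal (K / n) := by
  obtain ⟨t, htS, htfin, hcover⟩ := Metric.finite_approx_of_totallyBounded
    (totallyBounded_setOf_norm_le_lipschitzWith (A := A) (E := ℝ) 1 1) (ε / 4) (by positivity)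
  obtain ⟨t, rfl⟩ := htfin.exists_finset_coe
  refine ⟨t.card / (ε / 2) ^ 2, fun n X hX hindep => ?_⟩
  have hsub : {ω | ∃ h ∈ blUnitBall A, ε < |empiricalDeviation P X h ω|} ⊆
      ⋃ g ∈ t, {ω | ε / 2 ≤ |empiricalDeviation P X g ω|} := by
    rintro ω ⟨h, hh, hgt⟩
    obtain ⟨f, rfl, hf⟩ := exists_bcf_eq_norm_le_one_lipschitzWith_one_of_mem_blUnitBall hh
    obtain ⟨g, hgt', hfg⟩ := Set.mem_iUnion₂.1 (hcover hf)
    refine Set.mem_iUnion₂.2 ⟨g, hgt', ?_⟩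
    have hlip := abs_empiricalDeviation_sub_le hX f g ω
    have hrev := abs_sub_abs_le_abs_sub (empiricalDeviation P X f ω) (empiricalDeviation P X g ω)
    rw [Metric.mem_ball] at hfg
    show ε / 2 ≤ _
    linarith
  calc P {ω | ∃ h ∈ blUnitBall A, ε < |empiricalDeviation P X h ω|}
      ≤ ∑ g ∈ t, P {ω | ε / 2 ≤ |empiricalDeviation P X g ω|} :=
        (measure_mono hsub).trans (measure_biUnion_finset_le t _)
    _ ≤ ∑ g ∈ t, ENNReal.ofReal (1 / (n * (ε / 2) ^ 2)) := Finset.sum_le_sum fun g hg =>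
        (measure_le_abs_empiricalDeviation_le hX hindep g (by positivity)).trans <|
          ENNReal.ofReal_le_ofReal <| div_le_div_of_nonneg_right
            (pow_le_one₀ (norm_nonneg g) (htS hg).1) (by positivity)
    _ = ENNReal.ofReal (t.card / (ε / 2) ^ 2 / n) := by
        rw [Finset.sum_const, nsmul_eq_mul, ← ENNReal.ofReal_natCast,
          ← ENNReal.ofReal_mul (by positivity)]
        ring_nf

/-- The dual bounded-Lipschitz distance between the empirical measure of pairwise
independent random variables and their mean measure tends to 0 in probability:
for every ε > 0, the probability that some h in the bounded-Lipschitz unit ball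
separates them by more than ε tends to 0. -/
theorem beta_empirical_to_mean_in_probability {A : Type*} [MetricSpace A] [CompactSpace A]
    [MeasurableSpace A] [BorelSpace A]
    {Ω : Type*} [MeasurableSpace Ω] (P : Measure Ω) [IsProbabilityMeasure P]
    (X : (n : ℕ) → Fin n → Ω → A)
    (hmeas : ∀ n i, Measurable (X n i))
    (hindep : ∀ n, ∀ i j : Fin n, i ≠ j → IndepFun (X n i) (X n j) P)
    (ε : ℝ) (hε : 0 < ε) :
    Tendsto
      (fun n : ℕ =>
        P {ω | ∃ h : A → ℝ,
          (∃ (M : ℝ) (L : NNReal), (∀ a, |h a| ≤ M) ∧ LipschitzWith L h ∧ M + (L : ℝ) ≤ 1) ∧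
          ε < |(1 / (n : ℝ)) * ∑ i : Fin n, (h (X n i ω) - ∫ ω', h (X n i ω') ∂P)|})
      atTop (nhds 0) := by
  obtain ⟨K, hK⟩ := exists_forall_measure_blUnitBall_deviation_gt_le A P hε
  have hbound : Tendsto (fun n : ℕ => ENNReal.ofReal (K / n)) atTop (𝓝 0) := by
    simpa using ENNReal.tendsto_ofReal (tendsto_const_div_atTop_nhds_zero_nat K)
  exact tendsto_of_tendsto_of_tendsto_of_le_of_le tendsto_const_nhds hbound (fun _ => zero_le)
    fun n => hK n (X n) (fun i => (hmeas n i).aemeasurable) fun i j => hindep n i j
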